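/- For all real ζ with 0 < ζ < 1, ζ·F(-1/2, 1, 5/2; -ζ²) = (3/8)·((ζ - ζ^{-1}) + (ζ + ζ^{-1})²·arctan ζ), where F is the Gauss hypergeometric series F(α,β,γ;z) = ∑_{n≥0} z^n ∏_{j=0}^{n-1} (α+j)(β+j)/((1+j)(γ+j)). -/

import Mathlib

/-!
The coefficients telescope to `-3 / ((2n-1)(2n+1)(2n+3))`, whose partial fraction decomposition
`-(3/8)/(2n-1) + (3/4)/(2n+1) - (3/8)/(2n+3)` splits `ζ F(-1/2, 1, 5/2; -ζ²)` into three
alternating series `∑ (-1)ⁿ ζ^(2n+1) / (2n+a)`. For `a = 1` this is the Taylor series of `arctan ζ`,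
and the cases `a = -1` and `a = 3` are index shifts of it, hence elementary in `ζ` and `arctan ζ`.
-/

/-- The coefficients of the Gauss hypergeometric series `F(-1/2, 1, 5/2; z)`. -/
noncomputable def stmt13c (n : ℕ) : ℝ :=
  ∏ j ∈ Finset.range n,
    ((-1 / 2 + (j : ℝ)) * (1 + (j : ℝ))) / ((1 + (j : ℝ)) * (5 / 2 + (j : ℝ)))

open Real

lemma two_mul_natCast_sub_one_ne_zero (n : ℕ) : 2 * (n : ℝ) - 1 ≠ 0 := by
  intro h
  have : 2 * n = 1 := by exact_mod_cast (by linarith : (2 * n : ℝ) = 1)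
  omega

lemma stmt13c_eq (n : ℕ) :
    stmt13c n = -3 / ((2 * n - 1) * (2 * n + 1) * (2 * n + 3)) := by
  induction n with
  | zero => simp [stmt13c]
  | succ m ih =>
    rw [stmt13c, Finset.prod_range_succ, ← stmt13c, ih]
    have := two_mul_natCast_sub_one_ne_zero m
    push_cast
    rw [show 2 * ((m : ℝ) + 1) - 1 = 2 * m + 1 by ring]
    field_simp
    ring

lemma stmt13c_eq_partialFractions (n : ℕ) :
    stmt13c n = -3 / 8 / (2 * n - 1) + 3 / 4 / (2 * n + 1) - 3 / 8 / (2 * n + 3) := by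
  have := two_mul_natCast_sub_one_ne_zero n
  rw [stmt13c_eq]
  field_simp
  ring

lemma hasSum_pow_div_two_mul_add_one {x : ℝ} (hx : |x| < 1) :
    HasSum (fun n : ℕ => (-1) ^ n * x ^ (2 * n + 1) / (2 * n + 1)) (arctan x) := by
  exact_mod_cast Real.hasSum_arctan (x := x) hx

lemma hasSum_pow_div_two_mul_sub_one {x : ℝ} (hx : |x| < 1) :
    HasSum (fun n : ℕ => (-1) ^ n * x ^ (2 * n + 1) / (2 * n - 1)) (-x ^ 2 * arctan x - x) := by
  let f : ℕ → ℝ := fun n => (-1) ^ n * x ^ (2 * n + 1) / (2 * n - 1)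
  have hshift : HasSum (fun n => f (n + 1)) (-x ^ 2 * arctan x) :=
    ((hasSum_pow_div_two_mul_add_one hx).mul_left (-x ^ 2)).congr_fun fun n => by
      simp only [f]
      push_cast
      ring
  simpa [f, sub_eq_add_neg, div_neg] using (hasSum_nat_add_iff 1).mp hshift

lemma hasSum_pow_div_two_mul_add_three {x : ℝ} (hx : |x| < 1) :
    HasSum (fun n : ℕ => (-1) ^ n * x ^ (2 * n + 1) / (2 * n + 3)) ((x - arctan x) / x ^ 2) := by
  rcases eq_or_ne x 0 with rfl | hx0
  · simp
  let f : ℕ → ℝ := fun n => (-1) ^ n * x ^ (2 * n + 1) / (2 * n + 1)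
  have hshift : HasSum (fun n => f (n + 1)) (arctan x - x) :=
    (hasSum_nat_add_iff 1).mpr (by simpa [f] using hasSum_pow_div_two_mul_add_one hx)
  have hscaled : HasSum (fun n : ℕ => -x ^ 2 * ((-1) ^ n * x ^ (2 * n + 1) / (2 * n + 3)))
      (-x ^ 2 * ((x - arctan x) / x ^ 2)) := by
    rw [show -x ^ 2 * ((x - arctan x) / x ^ 2) = arctan x - x by field_simp; ring]
    refine hshift.congr_fun fun n => ?_
    simp only [f]
    push_cast
    ring
  exact (hasSum_mul_left_iff (neg_ne_zero.mpr (pow_ne_zero 2 hx0))).mp hscaled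

/-- For `0 < ζ < 1`,
`ζ F(-1/2,1,5/2; -ζ²) = (3/8)((ζ - ζ⁻¹) + (ζ + ζ⁻¹)² arctan ζ)`. -/
theorem stmt_13 :
    ∀ ζ : ℝ, 0 < ζ → ζ < 1 →
      ζ * ∑' n : ℕ, stmt13c n * (-ζ ^ 2) ^ n
        = (3 / 8) * ((ζ - ζ⁻¹) + (ζ + ζ⁻¹) ^ 2 * Real.arctan ζ) := by
  intro ζ hζ0 hζ1
  have hζ : |ζ| < 1 := by rwa [abs_of_pos hζ0]
  have hsum := (((hasSum_pow_div_two_mul_sub_one hζ).mul_left (-3 / 8)).add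
    ((hasSum_pow_div_two_mul_add_one hζ).mul_left (3 / 4))).sub
    ((hasSum_pow_div_two_mul_add_three hζ).mul_left (3 / 8))
  have hterm (n : ℕ) : ζ * (stmt13c n * (-ζ ^ 2) ^ n) =
      -3 / 8 * ((-1) ^ n * ζ ^ (2 * n + 1) / (2 * n - 1)) +
        3 / 4 * ((-1) ^ n * ζ ^ (2 * n + 1) / (2 * n + 1)) -
        3 / 8 * ((-1) ^ n * ζ ^ (2 * n + 1) / (2 * n + 3)) := by
    rw [stmt13c_eq_partialFractions]
    ring
  rw [← tsum_mul_left, funext hterm, hsum.tsum_eq]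
  field_simp
  ring
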